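/- arXiv:1805.09737 — 2 statements merged into one kernel-verified Lean document; each statement's English description precedes it below -/
import Mathlib

section
/- Let n ≥ 2 and let A, B be n×n real symmetric matrices with min{rank(A), rank(B)} ≤ 2. Then the pair (A,B) satisfies the weak interlacing property: inf E(A,B) ≤ inf O(A,B) and sup E(A,B) ≥ sup O(A,B). -/
open Matrix

noncomputable def frobNorm {n : ℕ} (M : Matrix (Fin n) (Fin n) ℝ) : ℝ :=
  Real.sqrt (Mᵀ * M).trace

def Eset {n : ℕ} (A B : Matrix (Fin n) (Fin n) ℝ) : Set ℝ :=
  {t | ∃ U : Matrix (Fin n) (Fin n) ℝ, Uᵀ = U ∧ frobNorm U = 1 ∧ t = (A * U * B * U).trace}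

def Oset {n : ℕ} (A B : Matrix (Fin n) (Fin n) ℝ) : Set ℝ :=
  {t | ∃ W : Matrix (Fin n) (Fin n) ℝ, Wᵀ = -W ∧ frobNorm W = 1 ∧ t = (A * W * B * Wᵀ).trace}

/-!
Both sets are invariant under an orthogonal change of basis, so when `B` has rank at most 2 we
may take `B = diagonal d` with `d` supported on two indices `i ≠ j`. Then
`trace (A W B Wᵀ) = ∑ l, d l * ⟪W eₗ, A W eₗ⟫` only sees the columns `i` and `j` of `W`. For a
skew `W`, keep column `i`, negate column `j`, let symmetry dictate rows `i` and `j`, and replace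
every other entry by its absolute value: this is a symmetric `U` with the same entries up to sign,
hence the same Frobenius norm, and with the same value, so `O(A,B) ⊆ E(A,B)`. As `O(A,B)` is
nonempty for `n ≥ 2` and `E(A,B)` is the image of a compact sphere under a continuous map, the
infima and suprema compare as claimed. The case `rank A ≤ 2` follows from the symmetry
`E(A,B) = E(B,A)`, `O(A,B) = O(B,A)`.
-/

open scoped Matrix.Norms.Frobenius

theorem Finset.exists_pair_cover {α : Type*} [Fintype α] [DecidableEq α]
    (hα : 2 ≤ Fintype.card α) {s : Finset α} (hs : s.card ≤ 2) :
    ∃ i j, i ≠ j ∧ ∀ k ∈ s, k = i ∨ k = j := by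
  obtain ⟨t, hst, ht⟩ := Finset.exists_superset_card_eq hs (by simpa using hα)
  obtain ⟨i, j, hij, rfl⟩ := Finset.card_eq_two.mp ht
  exact ⟨i, j, hij, fun k hk => by simpa using hst hk⟩

section Conjugation

variable {m R : Type*} [Fintype m] [CommSemiring R] {Q : Matrix m m R}

theorem transpose_conj (X : Matrix m m R) : (Qᵀ * X * Q)ᵀ = Qᵀ * Xᵀ * Q := by
  simp [Matrix.mul_assoc]

variable [DecidableEq m]

theorem conj_mul_conj (hQ : Q * Qᵀ = 1) (X Y : Matrix m m R) :
    Qᵀ * X * Q * (Qᵀ * Y * Q) = Qᵀ * (X * Y) * Q := by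
  simp only [Matrix.mul_assoc]
  rw [← Matrix.mul_assoc Q, hQ, Matrix.one_mul]

theorem conj_conj_transpose (hQ : Q * Qᵀ = 1) (X : Matrix m m R) :
    Qᵀᵀ * (Qᵀ * X * Q) * Qᵀ = X := by
  simp only [transpose_transpose, Matrix.mul_assoc, hQ, Matrix.mul_one]
  rw [← Matrix.mul_assoc, hQ, Matrix.one_mul]

theorem trace_conj (hQ : Q * Qᵀ = 1) (X : Matrix m m R) : (Qᵀ * X * Q).trace = X.trace := by
  rw [trace_mul_comm, ← Matrix.mul_assoc, hQ, Matrix.one_mul]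

theorem trace_mul_mul_diagonal_mul_transpose (A M : Matrix m m R) (d : m → R) :
    (A * M * diagonal d * Mᵀ).trace = ∑ l, d l * (col M l ⬝ᵥ A *ᵥ col M l) := by
  simp only [trace, diag, mul_apply, diagonal_apply, dotProduct, mulVec, col_apply,
    transpose_apply, mul_ite, mul_zero, Finset.sum_ite_eq', Finset.mem_univ, if_true,
    Finset.mul_sum, Finset.sum_mul]
  rw [Finset.sum_comm]
  exact Finset.sum_congr rfl fun l _ => Finset.sum_congr rfl fun k _ =>
    Finset.sum_congr rfl fun k' _ => by ring

end Conjugation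

theorem exists_conj_eq_diagonal {m : Type*} [Fintype m] [DecidableEq m] {B : Matrix m m ℝ}
    (hB : Bᵀ = B) :
    ∃ Q : Matrix m m ℝ, Q * Qᵀ = 1 ∧
      ∃ d : m → ℝ, Qᵀ * B * Q = diagonal d ∧ B.rank = Fintype.card {k // d k ≠ 0} := by
  have hH : B.IsHermitian := by rwa [IsHermitian, conjTranspose_eq_transpose_of_trivial]
  refine ⟨hH.eigenvectorUnitary, ?_, hH.eigenvalues, ?_, hH.rank_eq_card_non_zero_eigs⟩
  · simpa [star_eq_conjTranspose] using Unitary.coe_mul_star_self hH.eigenvectorUnitary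
  · simpa [star_eq_conjTranspose, Unitary.conjStarAlgAut_star_apply] using
      hH.conjStarAlgAut_star_eigenvectorUnitary

section SymmetricFlip

variable {m : Type*} [DecidableEq m]

def symmetricFlip (i j : m) (W : Matrix m m ℝ) : Matrix m m ℝ :=
  of fun k l => if l = i then W k l else if l = j then -W k l
    else if k = i then -W k l else if k = j then W k l else |W k l|

variable {i j : m} {W : Matrix m m ℝ}

theorem symmetricFlip_transpose (hij : i ≠ j) (hW : Wᵀ = -W) :
    (symmetricFlip i j W)ᵀ = symmetricFlip i j W := by
  have hW' : ∀ k l, W l k = -W k l := fun k l => by simpa using congr_fun₂ hW k l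
  have hdiag : ∀ k, W k k = 0 := fun k => by linarith [hW' k k]
  ext k l
  simp only [transpose_apply, symmetricFlip, of_apply, hW' k l, abs_neg]
  clear hW hW'
  split_ifs <;> subst_vars <;> simp_all

theorem abs_symmetricFlip_apply (k l : m) : |symmetricFlip i j W k l| = |W k l| := by
  simp only [symmetricFlip, of_apply]
  split_ifs <;> simp

theorem norm_symmetricFlip [Fintype m] : ‖symmetricFlip i j W‖ = ‖W‖ := by
  simp only [frobenius_norm_def, Real.norm_eq_abs, abs_symmetricFlip_apply]

theorem col_symmetricFlip_left : col (symmetricFlip i j W) i = col W i := by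
  ext k; simp [symmetricFlip]

theorem col_symmetricFlip_right (hij : i ≠ j) : col (symmetricFlip i j W) j = -col W j := by
  ext k; simp [symmetricFlip, hij.symm]

end SymmetricFlip

section FinDim

variable {n : ℕ}

theorem frobNorm_eq_norm (M : Matrix (Fin n) (Fin n) ℝ) : frobNorm M = ‖M‖ := by
  rw [frobNorm, frobenius_norm_def, Real.sqrt_eq_rpow]
  congr 1
  simp only [trace, diag, mul_apply, transpose_apply, Real.norm_eq_abs, Real.rpow_two, sq,
    abs_mul_abs_self]
  exact Finset.sum_comm

theorem frobNorm_conj {Q : Matrix (Fin n) (Fin n) ℝ} (hQ : Q * Qᵀ = 1)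
    (M : Matrix (Fin n) (Fin n) ℝ) : frobNorm (Qᵀ * M * Q) = frobNorm M := by
  rw [frobNorm, frobNorm, transpose_conj, conj_mul_conj hQ, trace_conj hQ]

theorem Eset_conj_subset {Q : Matrix (Fin n) (Fin n) ℝ} (hQ : Q * Qᵀ = 1)
    (A B : Matrix (Fin n) (Fin n) ℝ) : Eset A B ⊆ Eset (Qᵀ * A * Q) (Qᵀ * B * Q) := by
  rintro t ⟨U, hU, hUn, rfl⟩
  refine ⟨Qᵀ * U * Q, by rw [transpose_conj, hU], by rw [frobNorm_conj hQ, hUn], ?_⟩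
  rw [conj_mul_conj hQ, conj_mul_conj hQ, conj_mul_conj hQ, trace_conj hQ]

theorem Oset_conj_subset {Q : Matrix (Fin n) (Fin n) ℝ} (hQ : Q * Qᵀ = 1)
    (A B : Matrix (Fin n) (Fin n) ℝ) : Oset A B ⊆ Oset (Qᵀ * A * Q) (Qᵀ * B * Q) := by
  rintro t ⟨W, hW, hWn, rfl⟩
  refine ⟨Qᵀ * W * Q, by rw [transpose_conj, hW, Matrix.mul_neg, Matrix.neg_mul],
    by rw [frobNorm_conj hQ, hWn], ?_⟩
  rw [transpose_conj, conj_mul_conj hQ, conj_mul_conj hQ, conj_mul_conj hQ, trace_conj hQ]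

theorem Eset_conj {Q : Matrix (Fin n) (Fin n) ℝ} (hQ : Q * Qᵀ = 1)
    (A B : Matrix (Fin n) (Fin n) ℝ) : Eset (Qᵀ * A * Q) (Qᵀ * B * Q) = Eset A B := by
  have hQt : Qᵀ * Qᵀᵀ = 1 := by rw [transpose_transpose, mul_eq_one_comm.mp hQ]
  refine (Eset_conj_subset hQ A B).antisymm' ?_
  simpa only [conj_conj_transpose hQ] using Eset_conj_subset hQt (Qᵀ * A * Q) (Qᵀ * B * Q)

theorem Oset_conj {Q : Matrix (Fin n) (Fin n) ℝ} (hQ : Q * Qᵀ = 1)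
    (A B : Matrix (Fin n) (Fin n) ℝ) : Oset (Qᵀ * A * Q) (Qᵀ * B * Q) = Oset A B := by
  have hQt : Qᵀ * Qᵀᵀ = 1 := by rw [transpose_transpose, mul_eq_one_comm.mp hQ]
  refine (Oset_conj_subset hQ A B).antisymm' ?_
  simpa only [conj_conj_transpose hQ] using Oset_conj_subset hQt (Qᵀ * A * Q) (Qᵀ * B * Q)

theorem Eset_comm (A B : Matrix (Fin n) (Fin n) ℝ) : Eset A B = Eset B A := by
  suffices h : ∀ A B : Matrix (Fin n) (Fin n) ℝ, Eset A B ⊆ Eset B A from (h A B).antisymm (h B A)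
  rintro A B t ⟨U, hU, hUn, rfl⟩
  exact ⟨U, hU, hUn, by rw [Matrix.mul_assoc (A * U), trace_mul_comm, ← Matrix.mul_assoc]⟩

theorem Oset_comm (A B : Matrix (Fin n) (Fin n) ℝ) : Oset A B = Oset B A := by
  suffices h : ∀ A B : Matrix (Fin n) (Fin n) ℝ, Oset A B ⊆ Oset B A from (h A B).antisymm (h B A)
  rintro A B t ⟨W, hW, hWn, rfl⟩
  refine ⟨Wᵀ, by rw [transpose_transpose, hW, neg_neg],
    by rwa [frobNorm_eq_norm, frobenius_norm_transpose, ← frobNorm_eq_norm], ?_⟩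
  rw [transpose_transpose, Matrix.mul_assoc (A * W), trace_mul_comm, ← Matrix.mul_assoc]

theorem Eset_subset_image_sphere (A B : Matrix (Fin n) (Fin n) ℝ) :
    Eset A B ⊆ (fun U => (A * U * B * U).trace) '' Metric.sphere 0 1 := by
  rintro t ⟨U, -, hU, rfl⟩
  exact ⟨U, by rwa [mem_sphere_zero_iff_norm, ← frobNorm_eq_norm], rfl⟩

theorem Eset_bddAbove (A B : Matrix (Fin n) (Fin n) ℝ) : BddAbove (Eset A B) :=
  ((isCompact_sphere _ _).bddAbove_image (by fun_prop)).mono (Eset_subset_image_sphere A B)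

theorem Eset_bddBelow (A B : Matrix (Fin n) (Fin n) ℝ) : BddBelow (Eset A B) :=
  ((isCompact_sphere _ _).bddBelow_image (by fun_prop)).mono (Eset_subset_image_sphere A B)

theorem Oset_nonempty (hn : 2 ≤ n) (A B : Matrix (Fin n) (Fin n) ℝ) : (Oset A B).Nonempty := by
  have := Fin.nontrivial_iff_two_le.mpr hn
  obtain ⟨i, j, hij⟩ := exists_pair_ne (Fin n)
  set W₀ : Matrix (Fin n) (Fin n) ℝ := single i j 1 - single j i 1
  have hW₀ : W₀ᵀ = -W₀ := by simp [W₀, transpose_single]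
  have hne : W₀ ≠ 0 := fun h => by simpa [W₀, hij] using congr_fun₂ h i j
  exact ⟨_, ‖W₀‖⁻¹ • W₀, by rw [transpose_smul, hW₀, smul_neg], by
    rw [frobNorm_eq_norm, norm_smul, norm_inv, norm_norm,
      inv_mul_cancel₀ (norm_ne_zero_iff.mpr hne)], rfl⟩

theorem Oset_diagonal_subset_Eset {i j : Fin n} (hij : i ≠ j) {d : Fin n → ℝ}
    (hd : ∀ k, d k ≠ 0 → k = i ∨ k = j) (A : Matrix (Fin n) (Fin n) ℝ) :
    Oset A (diagonal d) ⊆ Eset A (diagonal d) := by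
  rintro t ⟨W, hW, hWn, rfl⟩
  set U := symmetricFlip i j W
  have hU : Uᵀ = U := symmetricFlip_transpose hij hW
  refine ⟨U, hU, by rwa [frobNorm_eq_norm, norm_symmetricFlip, ← frobNorm_eq_norm], ?_⟩
  have hcol : ∀ l, d l ≠ 0 → col U l ⬝ᵥ A *ᵥ col U l = col W l ⬝ᵥ A *ᵥ col W l := by
    intro l hl
    rcases hd l hl with rfl | rfl
    · rw [col_symmetricFlip_left]
    · rw [col_symmetricFlip_right hij, mulVec_neg, neg_dotProduct, dotProduct_neg, neg_neg]
  rw [show A * U * diagonal d * U = A * U * diagonal d * Uᵀ by rw [hU],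
    trace_mul_mul_diagonal_mul_transpose, trace_mul_mul_diagonal_mul_transpose]
  refine Finset.sum_congr rfl fun l _ => ?_
  by_cases hl : d l = 0
  · simp [hl]
  · rw [hcol l hl]

theorem Oset_subset_Eset_of_rank_le_two (hn : 2 ≤ n) (A : Matrix (Fin n) (Fin n) ℝ)
    {B : Matrix (Fin n) (Fin n) ℝ} (hB : Bᵀ = B) (hrank : B.rank ≤ 2) :
    Oset A B ⊆ Eset A B := by
  obtain ⟨Q, hQ, d, hBd, hrank_eq⟩ := exists_conj_eq_diagonal hB
  have hsupp : (Finset.univ.filter fun k => d k ≠ 0).card ≤ 2 := by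
    rwa [← Fintype.card_subtype, ← hrank_eq]
  obtain ⟨i, j, hij, hd⟩ := Finset.exists_pair_cover (by simpa using hn) hsupp
  rw [← Oset_conj hQ, ← Eset_conj hQ, hBd]
  exact Oset_diagonal_subset_Eset hij (fun k hk => hd k (by simpa using hk)) _

end FinDim

theorem stmt_5 (n : ℕ) (hn : 2 ≤ n) (A B : Matrix (Fin n) (Fin n) ℝ)
    (hA : Aᵀ = A) (hB : Bᵀ = B) (hrank : min A.rank B.rank ≤ 2) :
    sInf (Eset A B) ≤ sInf (Oset A B) ∧ sSup (Oset A B) ≤ sSup (Eset A B) := by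
  have hsub : Oset A B ⊆ Eset A B := by
    rcases min_le_iff.mp hrank with hrankA | hrankB
    · rw [Oset_comm, Eset_comm]
      exact Oset_subset_Eset_of_rank_le_two hn B hA hrankA
    · exact Oset_subset_Eset_of_rank_le_two hn A hB hrankB
  have hne := Oset_nonempty hn A B
  exact ⟨csInf_le_csInf (Eset_bddBelow A B) hne hsub, csSup_le_csSup (Eset_bddAbove A B) hne hsub⟩
end

section
/- Let n ≥ 2 and let B be an n×n real symmetric matrix whose smallest eigenvalue λₙ(B) has multiplicity 1 (a one-dimensional eigenspace). Then for every skew-symmetric matrix W ∈ Kⁿ with ‖W‖_F = 1 one has trace(W·B·Wᵀ) > λₙ(B). -/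
/-! Let `u_j` be an orthonormal eigenbasis of `B` and `s_j = ‖W u_j‖²`. Then
`trace (W B Wᵀ) = ∑ λ_j s_j` with `∑ s_j = ‖W‖_F² = 1`, a convex combination of the eigenvalues,
which exceeds `λ_min` unless `W u_j = 0` for every `j` other than the unique minimiser `j₀`.
In that case `W = (W u_{j₀}) u_{j₀}ᵀ` has rank one, and a skew-symmetric rank-one matrix vanishes:
`W_ab² = -W_ab W_ba = -W_aa W_bb = 0`. -/

open Matrix

theorem Finset.mul_sum_lt_sum_mul {ι R : Type*} [CommRing R] [LinearOrder R]
    [IsStrictOrderedRing R] (s : Finset ι) {m : R} {c w : ι → R}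
    (hc : ∀ j ∈ s, m ≤ c j) (hw : ∀ j ∈ s, 0 ≤ w j) {j₁ : ι} (hj₁ : j₁ ∈ s)
    (hc₁ : m < c j₁) (hw₁ : w j₁ ≠ 0) :
    m * ∑ j ∈ s, w j < ∑ j ∈ s, c j * w j := by
  rw [Finset.mul_sum, ← sub_pos, ← Finset.sum_sub_distrib]
  simp_rw [← sub_mul]
  exact Finset.sum_pos' (fun j hj => mul_nonneg (sub_nonneg.2 (hc j hj)) (hw j hj))
    ⟨j₁, hj₁, mul_pos (sub_pos.2 hc₁) ((hw j₁ hj₁).lt_of_ne' hw₁)⟩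

theorem ciInf_lt_of_filter_eq_singleton {ι α : Type*} [Fintype ι]
    [ConditionallyCompleteLinearOrder α] {f : ι → α} {j₀ : ι} (h : Finset.univ.filter (fun i => f i = ⨅ j, f j) = {j₀}) {j : ι}
    (hj : j ≠ j₀) : ⨅ i, f i < f j :=
  (ciInf_le (Finite.bddBelow_range f) j).lt_of_ne fun hfj =>
    hj (Finset.mem_singleton.1 (h ▸ Finset.mem_filter.2 ⟨Finset.mem_univ j, hfj.symm⟩))

namespace Matrix

variable {m n R : Type*}

theorem transpose_mul_self_apply_self_nonneg [Fintype m] [Semiring R] [LinearOrder R]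
    [IsOrderedRing R] [ExistsAddOfLE R] (M : Matrix m n R) (j : n) : 0 ≤ (Mᵀ * M) j j :=
  Finset.sum_nonneg fun i _ => mul_self_nonneg (M i j)

theorem transpose_mul_self_apply_self_eq_zero_iff [Fintype m] [Ring R] [LinearOrder R]
    [IsStrictOrderedRing R] (M : Matrix m n R) (j : n) :
    (Mᵀ * M) j j = 0 ↔ ∀ i, M i j = 0 := by
  rw [mul_apply, ← funext_iff]
  exact dotProduct_self_eq_zero

theorem mul_eq_vecMulVec_of_apply_eq_zero [Fintype n] [NonUnitalNonAssocSemiring R]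
    {p : Type*} {M : Matrix m n R} (N : Matrix n p R) {j₀ : n}
    (hM : ∀ i, ∀ j ≠ j₀, M i j = 0) :
    M * N = vecMulVec (fun i => M i j₀) (N j₀) := by
  ext i k
  rw [mul_apply, vecMulVec_apply, Finset.sum_eq_single j₀ (fun j _ hj => by simp [hM i j hj])
    (by simp)]

theorem vecMulVec_eq_zero_of_transpose_eq_neg [CommRing R] [IsAddTorsionFree R]
    [NoZeroDivisors R] {x y : n → R} (h : (vecMulVec x y)ᵀ = -vecMulVec x y) :
    vecMulVec x y = 0 := by
  have hskew a b : x b * y a = -(x a * y b) := by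
    simpa [vecMulVec_apply] using congrFun (congrFun h a) b
  have hdiag a : x a * y a = 0 := self_eq_neg.1 (hskew a a)
  ext a b
  have : (x a * y b) ^ 2 = 0 := by
    linear_combination (x a * y b) * hskew a b - (x b * y b) * hdiag a
  simpa [vecMulVec_apply] using this

variable [Fintype n]

theorem trace_transpose_mul_self_mul_of_mul_transpose_eq_one [Fintype m] [CommSemiring R]
    [DecidableEq n] (W : Matrix m n R) {U : Matrix n n R} (hU : U * Uᵀ = 1) :
    ((W * U)ᵀ * (W * U)).trace = (Wᵀ * W).trace := by
  rw [transpose_mul, Matrix.mul_assoc, trace_mul_comm, Matrix.mul_assoc, Matrix.mul_assoc W, hU,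
    Matrix.mul_one]

theorem trace_mul_diagonal_mul_transpose [Fintype m] [CommSemiring R] [DecidableEq n]
    (M : Matrix m n R) (d : n → R) :
    (M * diagonal d * Mᵀ).trace = ∑ j, d j * (Mᵀ * M) j j := by
  rw [trace_mul_cycle]
  simp [trace, mul_comm]

theorem trace_mul_mul_transpose_of_eq_mul_diagonal_mul_transpose [Fintype m] [CommSemiring R]
    [DecidableEq n] {B U : Matrix n n R} {d : n → R} (hB : B = U * diagonal d * Uᵀ)
    (W : Matrix m n R) :
    (W * B * Wᵀ).trace = ∑ j, d j * ((W * U)ᵀ * (W * U)) j j := by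
  rw [← trace_mul_diagonal_mul_transpose, hB, transpose_mul]
  simp only [Matrix.mul_assoc]

theorem IsHermitian.eq_mul_diagonal_mul_transpose [DecidableEq n] {B : Matrix n n ℝ}
    (hB : B.IsHermitian) :
    B = hB.eigenvectorUnitary * diagonal hB.eigenvalues *
      (hB.eigenvectorUnitary : Matrix n n ℝ)ᵀ :=
  hB.spectral_theorem

end Matrix

theorem stmt_13_general (n : ℕ) (B : Matrix (Fin n) (Fin n) ℝ)
    (hB : B.IsHermitian)
    (hmin : (Finset.univ.filter
        (fun i => hB.eigenvalues i = ⨅ j, hB.eigenvalues j)).card = 1)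
    (W : Matrix (Fin n) (Fin n) ℝ) (hW : Wᵀ = -W) (hWn : frobNorm W = 1) :
    (⨅ j, hB.eigenvalues j) < (W * B * Wᵀ).trace := by
  set U : Matrix (Fin n) (Fin n) ℝ := ↑hB.eigenvectorUnitary
  set M := W * U
  have hU : U * Uᵀ = 1 := Unitary.coe_mul_star_self hB.eigenvectorUnitary
  have hM : ∑ j, (Mᵀ * M) j j = 1 :=
    (trace_transpose_mul_self_mul_of_mul_transpose_eq_one W hU).trans (Real.sqrt_eq_one.mp hWn)
  obtain ⟨j₀, hj₀⟩ := Finset.card_eq_one.mp hmin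
  rw [trace_mul_mul_transpose_of_eq_mul_diagonal_mul_transpose hB.eq_mul_diagonal_mul_transpose]
  by_cases hcol : ∃ j ≠ j₀, (Mᵀ * M) j j ≠ 0
  · obtain ⟨j, hj, hne⟩ := hcol
    have := Finset.mul_sum_lt_sum_mul Finset.univ
      (fun j _ => ciInf_le (Finite.bddBelow_range _) j)
      (fun j _ => transpose_mul_self_apply_self_nonneg M j) (Finset.mem_univ j)
      (ciInf_lt_of_filter_eq_singleton hj₀ hj) hne
    rwa [hM, mul_one] at this
  · push Not at hcol
    have hW₀ : W = vecMulVec (fun i => M i j₀) (Uᵀ j₀) := by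
      rw [← mul_eq_vecMulVec_of_apply_eq_zero, Matrix.mul_assoc, hU, Matrix.mul_one]
      exact fun i j hj => (transpose_mul_self_apply_self_eq_zero_iff M j).1 (hcol j hj) i
    rw [hW₀, vecMulVec_eq_zero_of_transpose_eq_neg (hW₀ ▸ hW)] at hWn
    simp [frobNorm] at hWn

theorem stmt_13 (n : ℕ) (hn : 2 ≤ n) (B : Matrix (Fin n) (Fin n) ℝ)
    (hB : B.IsHermitian)
    (hmin : (Finset.univ.filter
        (fun i => hB.eigenvalues i = ⨅ j, hB.eigenvalues j)).card = 1)
    (W : Matrix (Fin n) (Fin n) ℝ) (hW : Wᵀ = -W) (hWn : frobNorm W = 1) :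
    (⨅ j, hB.eigenvalues j) < (W * B * Wᵀ).trace :=
  stmt_13_general n B hB hmin W hW hWn
end
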